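/- For every natural number n₁, the polynomial (1 − t)^{n₁} (1 − t²)² (1 − t³) has at least n₁ + 5 nonzero coefficients; in particular it never has exactly d + 1 = n₁ + 4 nonzero coefficients. -/
import Mathlib


open Polynomial Finset

/-- guarded binomial coefficient term -/
def Jt (n k j : ℕ) : ℤ := if j ≤ k then (n.choose (k - j) : ℤ) else 0

/-- signed coefficient function: `coeff p k = (-1)^k * Gt n k` -/
def Gt (n k : ℕ) : ℤ :=
  Jt n k 0 - 2 * Jt n k 2 + Jt n k 3 + Jt n k 4 - 2 * Jt n k 5 + Jt n k 7

lemma coeff_one_sub_X_pow (n k : ℕ) :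
    ((1 - X : Polynomial ℚ) ^ n).coeff k = (-1) ^ k * (n.choose k : ℚ) := by
  induction n generalizing k with
  | zero =>
    rcases k with _ | k <;> simp [coeff_one]
  | succ n ih =>
    have h : (1 - X : Polynomial ℚ) ^ (n + 1) = (1 - X) ^ n - (1 - X) ^ n * X ^ 1 := by
      ring
    rw [h, coeff_sub, coeff_mul_X_pow', ih]
    rcases k with _ | k
    · simp
    · rw [if_pos (by omega)]
      simp only [Nat.add_sub_cancel, ih, Nat.choose_succ_succ]
      push_cast
      ring

lemma ite_term (j k : ℕ) (c : ℚ) :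
    (if j ≤ k then ((-1 : ℚ)) ^ (k - j) * c else 0)
      = (-1) ^ k * (-1) ^ j * (if j ≤ k then c else 0) := by
  split_ifs with h
  · have h2 : ((-1 : ℚ)) ^ j * (-1) ^ j = 1 := by
      rw [← pow_add, ← two_mul, pow_mul]
      norm_num
    have h1 : ((-1 : ℚ)) ^ k * (-1) ^ j = (-1) ^ (k - j) := by
      have hx : ((-1 : ℚ)) ^ k = (-1) ^ (k - j) * (-1) ^ j := by
        rw [← pow_add, Nat.sub_add_cancel h]
      rw [hx, mul_assoc, h2, mul_one]
    linear_combination (-c) * h1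
  · ring

lemma coeff_eq (n k : ℕ) :
    ((1 - X) ^ n * (1 - X ^ 2) ^ 2 * (1 - X ^ 3) : Polynomial ℚ).coeff k
      = (-1) ^ k * ((Gt n k : ℤ) : ℚ) := by
  set a : Polynomial ℚ := (1 - X) ^ n with ha
  have hp : ((1 - X) ^ n * (1 - X ^ 2) ^ 2 * (1 - X ^ 3) : Polynomial ℚ)
      = a - (a * X ^ 2 + a * X ^ 2) - a * X ^ 3 + a * X ^ 4 + (a * X ^ 5 + a * X ^ 5)
        - a * X ^ 7 := by
    rw [ha]; ring
  rw [hp]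
  simp only [coeff_sub, coeff_add, coeff_mul_X_pow']
  have hc : ∀ m : ℕ, a.coeff m = (-1) ^ m * (n.choose m : ℚ) := fun m =>
    coeff_one_sub_X_pow n m
  have hite : ∀ j : ℕ, (if j ≤ k then a.coeff (k - j) else 0)
      = (-1) ^ k * (-1) ^ j * (if j ≤ k then (n.choose (k - j) : ℚ) else 0) := by
    intro j
    rw [← ite_term]
    split_ifs with h
    · rw [hc]
    · rfl
  rw [hc k, hite 2, hite 3, hite 4, hite 5, hite 7]
  have hJ : ∀ j : ℕ, ((Jt n k j : ℤ) : ℚ) = (if j ≤ k then (n.choose (k - j) : ℚ) else 0) := by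
    intro j
    unfold Jt
    split_ifs <;> simp
  unfold Gt
  push_cast
  simp only [hJ]
  have h0 : (if 0 ≤ k then (n.choose (k - 0) : ℚ) else 0) = (n.choose k : ℚ) := by
    simp
  rw [h0]
  split_ifs <;> ring

lemma fact_prod (a b : ℕ) :
    (((a + b).factorial : ℕ) : ℤ)
      = (a.factorial : ℤ) * ∏ i ∈ Finset.range b, ((a : ℤ) + (b : ℤ) - (i : ℤ)) := by
  induction b with
  | zero => simp
  | succ b ih =>
    have h3 : (a + (b + 1)).factorial = (a + b + 1) * (a + b).factorial := by
      rw [show a + (b + 1) = (a + b) + 1 from by omega, Nat.factorial_succ]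
    rw [h3]
    push_cast
    rw [Finset.prod_range_succ']
    have h2 : (∏ i ∈ Finset.range b, ((a : ℤ) + ((b : ℤ) + 1) - ((i + 1 : ℕ) : ℤ)))
        = ∏ i ∈ Finset.range b, ((a : ℤ) + (b : ℤ) - (i : ℤ)) :=
      Finset.prod_congr rfl (fun i _ => by push_cast; ring)
    rw [h2, ih]
    push_cast
    ring

lemma term_id (n k j : ℕ) (hj : j ≤ 7) (hk : k ≤ n + 7) :
    Jt n k j * (k.factorial : ℤ) * ((n + 7 - k).factorial : ℤ)
      = (n.factorial : ℤ) * (∏ i ∈ Finset.range j, ((k : ℤ) - (i : ℤ))) *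
          (∏ i ∈ Finset.range (7 - j), ((n : ℤ) + 7 - (i : ℤ) - (k : ℤ))) := by
  unfold Jt
  by_cases hjk : j ≤ k
  · rw [if_pos hjk]
    by_cases hkn : k ≤ n + j
    · have hkj : k - j ≤ n := by omega
      have h1 : (k.factorial : ℤ)
          = ((k - j).factorial : ℤ) * ∏ i ∈ Finset.range j, ((k : ℤ) - (i : ℤ)) := by
        have h := fact_prod (k - j) j
        rw [Nat.sub_add_cancel hjk] at h
        rw [h]
        congr 1
        apply Finset.prod_congr rfl
        intro i _
        omega
      have h2 : ((n + 7 - k).factorial : ℤ)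
          = ((n - (k - j)).factorial : ℤ) *
              ∏ i ∈ Finset.range (7 - j), ((n : ℤ) + 7 - (i : ℤ) - (k : ℤ)) := by
        have h := fact_prod (n - (k - j)) (7 - j)
        have e : n - (k - j) + (7 - j) = n + 7 - k := by omega
        rw [e] at h
        rw [h]
        congr 1
        apply Finset.prod_congr rfl
        intro i _
        omega
      have h3 : ((n.choose (k - j) : ℕ) : ℤ) * ((k - j).factorial : ℤ)
            * ((n - (k - j)).factorial : ℤ) = (n.factorial : ℤ) := by
        exact_mod_cast congrArg (fun x : ℕ => (x : ℤ))
          (Nat.choose_mul_factorial_mul_factorial hkj)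
      rw [h1, h2, ← h3]
      ring
    · have hch : n.choose (k - j) = 0 := Nat.choose_eq_zero_of_lt (by omega)
      have hz : ∏ i ∈ Finset.range (7 - j), ((n : ℤ) + 7 - (i : ℤ) - (k : ℤ)) = 0 := by
        apply Finset.prod_eq_zero (i := n + 7 - k) (Finset.mem_range.2 (by omega))
        omega
      rw [hch, hz]
      simp
  · rw [if_neg hjk]
    have hz : ∏ i ∈ Finset.range j, ((k : ℤ) - (i : ℤ)) = 0 := by
      apply Finset.prod_eq_zero (i := k) (Finset.mem_range.2 (by omega))
      simp
    rw [hz]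
    simp

lemma key_id (n k : ℕ) (hk : k ≤ n + 7) :
    4 * Gt n k * (k.factorial : ℤ) * ((n + 7 - k).factorial : ℤ)
      = (n.factorial : ℤ) * ((n : ℤ) + 1) * ((n : ℤ) + 2) * ((n : ℤ) + 3) *
        (3 * (2 * (k : ℤ) - ((n : ℤ) + 7)) ^ 4
          + ((n : ℤ) ^ 2 - 9 * (n : ℤ) - 82) * (2 * (k : ℤ) - ((n : ℤ) + 7)) ^ 2
          - ((n : ℤ) + 7) * ((n : ℤ) ^ 2 - 25)) := by
  have h0 := term_id n k 0 (by omega) hk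
  have h2 := term_id n k 2 (by omega) hk
  have h3 := term_id n k 3 (by omega) hk
  have h4 := term_id n k 4 (by omega) hk
  have h5 := term_id n k 5 (by omega) hk
  have h7 := term_id n k 7 (by omega) hk
  norm_num [Finset.prod_range_succ] at h0 h2 h3 h4 h5 h7
  unfold Gt
  linear_combination 4 * h0 - 8 * h2 + 4 * h3 + 4 * h4 - 8 * h5 + 4 * h7

lemma Gt_zero_iff (n k : ℕ) (hk : k ≤ n + 7) :
    Gt n k = 0 ↔
      3 * (2 * (k : ℤ) - ((n : ℤ) + 7)) ^ 4
          + ((n : ℤ) ^ 2 - 9 * (n : ℤ) - 82) * (2 * (k : ℤ) - ((n : ℤ) + 7)) ^ 2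
        = ((n : ℤ) + 7) * ((n : ℤ) ^ 2 - 25) := by
  have h := key_id n k hk
  have hfac1 : (0 : ℤ) < (k.factorial : ℤ) := by exact_mod_cast k.factorial_pos
  have hfac2 : (0 : ℤ) < ((n + 7 - k).factorial : ℤ) := by
    exact_mod_cast (n + 7 - k).factorial_pos
  have hfac3 : (0 : ℤ) < (n.factorial : ℤ) := by exact_mod_cast n.factorial_pos
  constructor
  · intro hG
    have hne : (n.factorial : ℤ) * ((n : ℤ) + 1) * ((n : ℤ) + 2) * ((n : ℤ) + 3) ≠ 0 := by
      positivity
    rw [hG] at h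
    simp only [mul_zero, zero_mul] at h
    have hQ := (mul_eq_zero.1 h.symm).resolve_left hne
    linarith [hQ]
  · intro hQ
    have hz : 4 * Gt n k * (k.factorial : ℤ) * ((n + 7 - k).factorial : ℤ) = 0 := by
      rw [h]
      linear_combination ((n.factorial : ℤ) * ((n : ℤ) + 1) * ((n : ℤ) + 2) * ((n : ℤ) + 3)) * hQ
    have h1 : (4 : ℤ) * (Gt n k * ((k.factorial : ℤ) * ((n + 7 - k).factorial : ℤ))) = 0 := by
      linear_combination hz
    have h1' := (mul_eq_zero.1 h1).resolve_left (by norm_num)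
    exact (mul_eq_zero.1 h1').resolve_right (mul_pos hfac1 hfac2).ne' 

lemma square_unique (B C x y : ℤ) (hC : 0 < C)
    (hx : 3 * x ^ 4 + B * x ^ 2 = C) (hy : 3 * y ^ 4 + B * y ^ 2 = C) :
    x ^ 2 = y ^ 2 := by
  have h3 : (x ^ 2 - y ^ 2) * (3 * (x ^ 2 * y ^ 2) + C) = 0 := by
    linear_combination y ^ 2 * hx - x ^ 2 * hy
  have hpos : 0 < 3 * (x ^ 2 * y ^ 2) + C := by positivity
  rcases mul_eq_zero.1 h3 with h' | h'
  · linarith [h']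
  · linarith [h']

lemma card_zero_set_le (n : ℕ) :
    ((Finset.range (n + 8)).filter (fun k => Gt n k = 0)).card ≤ 3 := by
  by_cases hn : n ≤ 5
  · interval_cases n <;> decide
  · by_contra hcon
    push_neg at hcon
    have h2 : 2 < ((Finset.range (n + 8)).filter (fun k => Gt n k = 0)).card := by omega
    obtain ⟨a, b, c, ha, hb, hc, hab, hac, hbc⟩ := Finset.two_lt_card_iff.1 h2
    simp only [Finset.mem_filter, Finset.mem_range] at ha hb hc
    have hQ : ∀ m : ℕ, m < n + 8 → Gt n m = 0 →
        3 * (2 * (m : ℤ) - ((n : ℤ) + 7)) ^ 4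
          + ((n : ℤ) ^ 2 - 9 * (n : ℤ) - 82) * (2 * (m : ℤ) - ((n : ℤ) + 7)) ^ 2
        = ((n : ℤ) + 7) * ((n : ℤ) ^ 2 - 25) := by
      intro m hm hG
      exact (Gt_zero_iff n m (by omega)).1 hG
    have hC : 0 < ((n : ℤ) + 7) * ((n : ℤ) ^ 2 - 25) := by
      have h6 : (6 : ℤ) ≤ (n : ℤ) := by exact_mod_cast (by omega : 6 ≤ n)
      nlinarith
    set ta : ℤ := 2 * (a : ℤ) - ((n : ℤ) + 7) with hta
    set tb : ℤ := 2 * (b : ℤ) - ((n : ℤ) + 7) with htb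
    set tc : ℤ := 2 * (c : ℤ) - ((n : ℤ) + 7) with htc
    have hQa := hQ a ha.1 ha.2
    have hQb := hQ b hb.1 hb.2
    have hQc := hQ c hc.1 hc.2
    have hsq1 : ta ^ 2 = tb ^ 2 := square_unique _ _ _ _ hC hQa hQb
    have hsq2 : ta ^ 2 = tc ^ 2 := square_unique _ _ _ _ hC hQa hQc
    have htab : ta ≠ tb := by
      intro h
      apply hab
      omega
    have htac : ta ≠ tc := by
      intro h
      apply hac
      omega
    have htbc : tb ≠ tc := by
      intro h
      apply hbc
      omega
    have h1 : (ta - tb) * (ta + tb) = 0 := by linear_combination hsq1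
    have h2' : (ta - tc) * (ta + tc) = 0 := by linear_combination hsq2
    have hb' : tb = -ta := by
      rcases mul_eq_zero.1 h1 with h' | h'
      · exact absurd (by linarith : ta = tb) htab
      · linarith
    have hc' : tc = -ta := by
      rcases mul_eq_zero.1 h2' with h' | h'
      · exact absurd (by linarith : ta = tc) htac
      · linarith
    exact htbc (by rw [hb', hc'])

/-- For every natural `n₁`, the polynomial `(1 − t)^{n₁} (1 − t²)² (1 − t³)` has at least
`n₁ + 5` nonzero coefficients; in particular it never has exactly `d + 1 = n₁ + 4` nonzero
coefficients. -/
theorem stmt8 (n₁ : ℕ) :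
    n₁ + 5 ≤ (((1 - X) ^ n₁ * (1 - X ^ 2) ^ 2 * (1 - X ^ 3) : Polynomial ℚ)).support.card ∧
      (((1 - X) ^ n₁ * (1 - X ^ 2) ^ 2 * (1 - X ^ 3) : Polynomial ℚ)).support.card ≠ n₁ + 4 := by
  set p : Polynomial ℚ := (1 - X) ^ n₁ * (1 - X ^ 2) ^ 2 * (1 - X ^ 3) with hpdef
  have hcoeff : ∀ k : ℕ, p.coeff k = 0 ↔ Gt n₁ k = 0 := by
    intro k
    rw [hpdef, coeff_eq]
    constructor
    · intro h
      rcases mul_eq_zero.1 h with h' | h'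
      · exact absurd h' (by positivity)
      · exact_mod_cast h'
    · intro h
      rw [h]
      simp
  have hdeg : p.natDegree < n₁ + 8 := by
    have h1 : ((1 - X : Polynomial ℚ) ^ n₁).natDegree ≤ n₁ := by
      refine natDegree_pow_le.trans ?_
      have : (1 - X : Polynomial ℚ).natDegree ≤ 1 :=
        (natDegree_sub_le _ _).trans (by simp)
      nlinarith [this]
    have h2 : ((1 - X ^ 2 : Polynomial ℚ) ^ 2).natDegree ≤ 4 := by
      refine natDegree_pow_le.trans ?_
      have : (1 - X ^ 2 : Polynomial ℚ).natDegree ≤ 2 :=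
        (natDegree_sub_le _ _).trans (by simp)
      omega
    have h3 : (1 - X ^ 3 : Polynomial ℚ).natDegree ≤ 3 :=
      (natDegree_sub_le _ _).trans (by simp)
    have := natDegree_mul_le (p := (1 - X : Polynomial ℚ) ^ n₁ * (1 - X ^ 2) ^ 2)
      (q := (1 - X ^ 3 : Polynomial ℚ))
    have h12 := natDegree_mul_le (p := (1 - X : Polynomial ℚ) ^ n₁)
      (q := (1 - X ^ 2 : Polynomial ℚ) ^ 2)
    rw [hpdef]
    omega
  have hsupp : p.support ⊆ Finset.range (n₁ + 8) := supp_subset_range hdeg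
  have hsupp_eq : p.support = (Finset.range (n₁ + 8)).filter (fun k => ¬ Gt n₁ k = 0) := by
    ext k
    simp only [mem_support_iff, Finset.mem_filter, Finset.mem_range]
    constructor
    · intro h
      refine ⟨Finset.mem_range.1 (hsupp (mem_support_iff.2 h)), ?_⟩
      intro hG
      exact h ((hcoeff k).2 hG)
    · rintro ⟨_, hG⟩
      intro h
      exact hG ((hcoeff k).1 h)
  have hpart := Finset.card_filter_add_card_filter_not
    (s := Finset.range (n₁ + 8)) (p := fun k => Gt n₁ k = 0)
  have hle := card_zero_set_le n₁
  rw [Finset.card_range] at hpart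
  rw [hsupp_eq]
  constructor
  · omega
  · omega
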